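/- Let E = 5·B₂ + 3·B₃ ∈ W and let E' = 12δ₁₄ + 9(δ₂₅ + δ₂₆ + δ₅₆) + 6(δ₁₃ + δ₁₇ + δ₂₃ + δ₂₇ + δ₃₄ + δ₃₇ + δ₄₇) + 3(δ₁₅ + δ₁₆ + δ₃₅ + δ₃₆ + δ₄₅ + δ₄₆ + δ₅₇ + δ₆₇) + 15δ₂₅₆ + 12(δ₁₄₇ + δ₁₃₄) + 6(δ₁₃₇ + δ₁₄₅ + δ₁₄₆ + δ₂₃₅ + δ₂₃₆ + δ₂₃₇ + δ₂₅₇ + δ₂₆₇ + δ₃₄₇) + 3(δ₁₅₆ + δ₃₅₆ + δ₄₅₆ + δ₅₆₇) ∈ W. Then E − E' lies in the subspace 𝒦 spanned by the Keel elements. In particular, E is congruent modulo Keel relations to an effective (nonnegative integral) combination of boundary symbols in which both δ_{{1,2}} and δ_{{3,4,5}} occur with coefficient zero. -/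
import Mathlib


/- The ℚ-vector space `W` with basis `δ_I` for subsets `I ⊆ {1,…,7}` with `2 ≤ |I| ≤ 5`,
modulo `δ_I = δ_{Iᶜ}`: we model it inside `Finset (Fin 7) →₀ ℚ`, sending `δ_I` to the
basis vector indexed by `I` when `|I| ≤ 3` and by `Iᶜ` otherwise. -/

noncomputable def delta (I : Finset (Fin 7)) : Finset (Fin 7) →₀ ℚ :=
  if I.card ≤ 3 then Finsupp.single I 1 else Finsupp.single Iᶜ 1

noncomputable def B2 : Finset (Fin 7) →₀ ℚ :=
  ∑ I ∈ Finset.univ.filter (fun I : Finset (Fin 7) => I.card = 2), delta I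

noncomputable def B3 : Finset (Fin 7) →₀ ℚ :=
  ∑ I ∈ Finset.univ.filter (fun I : Finset (Fin 7) => I.card = 3), delta I

/-- The Keel element `R(i,j;k,l)`. -/
noncomputable def keel (i j k l : Fin 7) : Finset (Fin 7) →₀ ℚ :=
  (∑ I ∈ Finset.univ.filter (fun I : Finset (Fin 7) =>
      2 ≤ I.card ∧ I.card ≤ 5 ∧ i ∈ I ∧ j ∈ I ∧ k ∉ I ∧ l ∉ I), delta I)
  - (∑ I ∈ Finset.univ.filter (fun I : Finset (Fin 7) =>
      2 ≤ I.card ∧ I.card ≤ 5 ∧ i ∈ I ∧ k ∈ I ∧ j ∉ I ∧ l ∉ I), delta I)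

/-- The span `𝒦` of all Keel elements. -/
noncomputable def keelSpan : Submodule ℚ (Finset (Fin 7) →₀ ℚ) :=
  Submodule.span ℚ { x | ∃ i j k l : Fin 7,
    i ≠ j ∧ i ≠ k ∧ i ≠ l ∧ j ≠ k ∧ j ≠ l ∧ k ≠ l ∧ x = keel i j k l }

/- `E' = 12δ₁₄ + 9(δ₂₅+δ₂₆+δ₅₆) + 6(δ₁₃+δ₁₇+δ₂₃+δ₂₇+δ₃₄+δ₃₇+δ₄₇)
      + 3(δ₁₅+δ₁₆+δ₃₅+δ₃₆+δ₄₅+δ₄₆+δ₅₇+δ₆₇) + 15δ₂₅₆ + 12(δ₁₄₇+δ₁₃₄)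
      + 6(δ₁₃₇+δ₁₄₅+δ₁₄₆+δ₂₃₅+δ₂₃₆+δ₂₃₇+δ₂₅₇+δ₂₆₇+δ₃₄₇)
      + 3(δ₁₅₆+δ₃₅₆+δ₄₅₆+δ₅₆₇)`, with labels `1,…,7` realized as `0,…,6 : Fin 7`. -/
noncomputable def Eprime : Finset (Fin 7) →₀ ℚ :=
  (12 : ℚ) • delta {0, 3}
  + (9 : ℚ) • (delta {1, 4} + delta {1, 5} + delta {4, 5})
  + (6 : ℚ) • (delta {0, 2} + delta {0, 6} + delta {1, 2} + delta {1, 6}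
      + delta {2, 3} + delta {2, 6} + delta {3, 6})
  + (3 : ℚ) • (delta {0, 4} + delta {0, 5} + delta {2, 4} + delta {2, 5}
      + delta {3, 4} + delta {3, 5} + delta {4, 6} + delta {5, 6})
  + (15 : ℚ) • delta {1, 4, 5}
  + (12 : ℚ) • (delta {0, 3, 6} + delta {0, 2, 3})
  + (6 : ℚ) • (delta {0, 2, 6} + delta {0, 3, 4} + delta {0, 3, 5}
      + delta {1, 2, 4} + delta {1, 2, 5} + delta {1, 2, 6}
      + delta {1, 4, 6} + delta {1, 5, 6} + delta {2, 3, 6})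
  + (3 : ℚ) • (delta {0, 4, 5} + delta {2, 4, 5} + delta {3, 4, 5} + delta {4, 5, 6})


def deltaZ (I a : Finset (Fin 7)) : ℤ :=
  if I.card ≤ 3 then (if I = a then 1 else 0) else (if Iᶜ = a then 1 else 0)

def keelZ (i j k l : Fin 7) (a : Finset (Fin 7)) : ℤ :=
  (∑ I ∈ Finset.univ.filter (fun I : Finset (Fin 7) =>
      2 ≤ I.card ∧ I.card ≤ 5 ∧ i ∈ I ∧ j ∈ I ∧ k ∉ I ∧ l ∉ I), deltaZ I a)
  - (∑ I ∈ Finset.univ.filter (fun I : Finset (Fin 7) =>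
      2 ≤ I.card ∧ I.card ≤ 5 ∧ i ∈ I ∧ k ∈ I ∧ j ∉ I ∧ l ∉ I), deltaZ I a)

def B2Z (a : Finset (Fin 7)) : ℤ :=
  ∑ I ∈ Finset.univ.filter (fun I : Finset (Fin 7) => I.card = 2), deltaZ I a

def B3Z (a : Finset (Fin 7)) : ℤ :=
  ∑ I ∈ Finset.univ.filter (fun I : Finset (Fin 7) => I.card = 3), deltaZ I a

def EZ (a : Finset (Fin 7)) : ℤ :=
  12 * deltaZ {0, 3} a
  + 9 * (deltaZ {1, 4} a + deltaZ {1, 5} a + deltaZ {4, 5} a)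
  + 6 * (deltaZ {0, 2} a + deltaZ {0, 6} a + deltaZ {1, 2} a + deltaZ {1, 6} a
      + deltaZ {2, 3} a + deltaZ {2, 6} a + deltaZ {3, 6} a)
  + 3 * (deltaZ {0, 4} a + deltaZ {0, 5} a + deltaZ {2, 4} a + deltaZ {2, 5} a
      + deltaZ {3, 4} a + deltaZ {3, 5} a + deltaZ {4, 6} a + deltaZ {5, 6} a)
  + 15 * deltaZ {1, 4, 5} a
  + 12 * (deltaZ {0, 3, 6} a + deltaZ {0, 2, 3} a)
  + 6 * (deltaZ {0, 2, 6} a + deltaZ {0, 3, 4} a + deltaZ {0, 3, 5} a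
      + deltaZ {1, 2, 4} a + deltaZ {1, 2, 5} a + deltaZ {1, 2, 6} a
      + deltaZ {1, 4, 6} a + deltaZ {1, 5, 6} a + deltaZ {2, 3, 6} a)
  + 3 * (deltaZ {0, 4, 5} a + deltaZ {2, 4, 5} a + deltaZ {3, 4, 5} a + deltaZ {4, 5, 6} a)

set_option maxRecDepth 100000 in
set_option maxHeartbeats 4000000 in
theorem keyZ : ∀ a : Finset (Fin 7), 5 * B2Z a + 3 * B3Z a - EZ a = (-5) * keelZ 0 1 2 3 a + (2) * keelZ 0 1 2 4 a + (6) * keelZ 0 1 2 5 a + (-2) * keelZ 0 1 2 6 a + (2) * keelZ 0 1 3 4 a + (2) * keelZ 0 1 3 5 a + (-1) * keelZ 0 1 3 6 a + (-4) * keelZ 0 1 4 5 a + (2) * keelZ 0 1 4 6 a + (2) * keelZ 0 1 5 6 a + (-4) * keelZ 0 3 1 2 a + (4) * keelZ 0 5 1 2 a + (-1) * keelZ 0 6 1 2 a := by decide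

lemma delta_apply_eq (I a : Finset (Fin 7)) : delta I a = ((deltaZ I a : ℤ) : ℚ) := by
  rw [delta, deltaZ]
  by_cases h : I.card ≤ 3 <;>
    simp only [h, if_true, if_false, Finsupp.single_apply] <;> split_ifs <;> simp

lemma sum_delta_apply_eq (s : Finset (Finset (Fin 7))) (a : Finset (Fin 7)) :
    (∑ I ∈ s, delta I) a = (((∑ I ∈ s, deltaZ I a : ℤ)) : ℚ) := by
  rw [Finsupp.finset_sum_apply]
  push_cast
  exact Finset.sum_congr rfl fun I _ => delta_apply_eq I a

lemma keel_apply_eq (i j k l : Fin 7) (a : Finset (Fin 7)) :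
    keel i j k l a = ((keelZ i j k l a : ℤ) : ℚ) := by
  rw [keel, keelZ, Finsupp.sub_apply, sum_delta_apply_eq, sum_delta_apply_eq]
  push_cast
  ring

lemma B2_apply_eq (a : Finset (Fin 7)) : B2 a = ((B2Z a : ℤ) : ℚ) := by
  rw [B2, B2Z, sum_delta_apply_eq]

lemma B3_apply_eq (a : Finset (Fin 7)) : B3 a = ((B3Z a : ℤ) : ℚ) := by
  rw [B3, B3Z, sum_delta_apply_eq]

lemma Eprime_apply_eq (a : Finset (Fin 7)) : Eprime a = ((EZ a : ℤ) : ℚ) := by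
  rw [Eprime, EZ]
  simp only [Finsupp.coe_add, Finsupp.coe_smul, Pi.add_apply, Pi.smul_apply, smul_eq_mul,
    delta_apply_eq]
  push_cast
  ring

/-- `E = 5B₂ + 3B₃` is congruent, modulo the Keel relations, to the effective combination
`E'`, in which both `δ_{{1,2}}` and `δ_{{3,4,5}}` occur with coefficient zero. -/
theorem E_sub_Eprime_mem_keelSpan :
    (5 : ℚ) • B2 + (3 : ℚ) • B3 - Eprime ∈ keelSpan := by
  have h : (5 : ℚ) • B2 + (3 : ℚ) • B3 - Eprime = ((-5 : ℚ)) • keel 0 1 2 3 + ((2 : ℚ)) • keel 0 1 2 4 + ((6 : ℚ)) • keel 0 1 2 5 + ((-2 : ℚ)) • keel 0 1 2 6 + ((2 : ℚ)) • keel 0 1 3 4 + ((2 : ℚ)) • keel 0 1 3 5 + ((-1 : ℚ)) • keel 0 1 3 6 + ((-4 : ℚ)) • keel 0 1 4 5 + ((2 : ℚ)) • keel 0 1 4 6 + ((2 : ℚ)) • keel 0 1 5 6 + ((-4 : ℚ)) • keel 0 3 1 2 + ((4 : ℚ)) • keel 0 5 1 2 + ((-1 : ℚ)) • keel 0 6 1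 2 := by
    ext a
    simp only [Finsupp.coe_add, Finsupp.coe_sub, Finsupp.coe_smul, Pi.add_apply, Pi.sub_apply,
      Pi.smul_apply, smul_eq_mul, B2_apply_eq, B3_apply_eq, Eprime_apply_eq, keel_apply_eq]
    exact_mod_cast keyZ a
  rw [h]
  have mem : ∀ i j k l : Fin 7, i ≠ j → i ≠ k → i ≠ l → j ≠ k → j ≠ l → k ≠ l →
      keel i j k l ∈ keelSpan := fun i j k l h1 h2 h3 h4 h5 h6 =>
    Submodule.subset_span ⟨i, j, k, l, h1, h2, h3, h4, h5, h6, rfl⟩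
  repeat' apply Submodule.add_mem
  all_goals
    exact Submodule.smul_mem _ _ (mem _ _ _ _ (by decide) (by decide) (by decide)
      (by decide) (by decide) (by decide))
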